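/- If the partition P_max maximizing an additive quality function Q over Π_C is not the trivial partition {C}, then P_max restricted to each child Cᵢ of C is a partition of Cᵢ maximizing Q over Π_{Cᵢ}. -/

import Mathlib

/-- A dendrogram: a rooted tree whose leaves are labelled by vertices. -/
inductive Dendrogram (V : Type*) where
  | leaf : V → Dendrogram V
  | node : List (Dendrogram V) → Dendrogram V

variable {V : Type*} [DecidableEq V]

/-- The set of vertices covered by a dendrogram node. -/
def Dendrogram.carrier : Dendrogram V → Finset V
  | .leaf v => {v}
  | .node cs => (cs.attach.map (fun d => d.1.carrier)).foldr (· ∪ ·) ∅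
decreasing_by simp only [Dendrogram.node.sizeOf_spec]; have := List.sizeOf_lt_of_mem d.2; omega

/-- The set of all subsets of `V` appearing as nodes of the dendrogram. -/
def Dendrogram.nodes : Dendrogram V → Finset (Finset V)
  | .leaf v => {{v}}
  | .node cs =>
      insert (Dendrogram.node cs).carrier
        ((cs.attach.map (fun d => d.1.nodes)).foldr (· ∪ ·) ∅)
decreasing_by simp only [Dendrogram.node.sizeOf_spec]; have := List.sizeOf_lt_of_mem d.2; omega

/-- Well-formedness: children of each internal node are nonempty in number and
pairwise disjoint (hence they form a partition of the node's carrier). -/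
def Dendrogram.Valid : Dendrogram V → Prop
  | .leaf _ => True
  | .node cs => cs ≠ [] ∧ cs.Pairwise (fun a b => Disjoint a.carrier b.carrier) ∧
      ∀ d ∈ cs, d.Valid

/-- `Π_C`: the set of partitions of the carrier of `D` all of whose parts are
nodes of the dendrogram `D`. -/
def Dendrogram.parts (D : Dendrogram V) : Set (Finset (Finset V)) :=
  {P | (∀ C ∈ P, C ∈ D.nodes) ∧
       (∀ C₁ ∈ P, ∀ C₂ ∈ P, C₁ ≠ C₂ → Disjoint C₁ C₂) ∧
       P.biUnion id = D.carrier}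

lemma mem_foldr_union {β : Type*} [DecidableEq β] {l : List (Finset β)} {x : β} :
    x ∈ l.foldr (· ∪ ·) ∅ ↔ ∃ s ∈ l, x ∈ s := by
  induction l with
  | nil => simp
  | cons a t ih => simp [ih]

lemma mem_carrier_node {cs : List (Dendrogram V)} {x : V} :
    x ∈ (Dendrogram.node cs).carrier ↔ ∃ d ∈ cs, x ∈ d.carrier := by
  rw [Dendrogram.carrier]
  simp [mem_foldr_union ]

lemma mem_nodes_node {cs : List (Dendrogram V)} {C : Finset V} :
    C ∈ (Dendrogram.node cs).nodes ↔
      C = (Dendrogram.node cs).carrier ∨ ∃ d ∈ cs, C ∈ d.nodes := by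
  rw [Dendrogram.nodes]
  simp [mem_foldr_union ]

theorem subset_carrier_of_mem_nodes : ∀ (d : Dendrogram V), ∀ C ∈ d.nodes, C ⊆ d.carrier
  | .leaf v => by simp [Dendrogram.nodes, Dendrogram.carrier]
  | .node cs => by
      intro C hC
      rcases mem_nodes_node.mp hC with rfl | ⟨d, hd, hC⟩
      · exact subset_rfl
      · intro x hx
        exact mem_carrier_node.mpr ⟨d, hd, subset_carrier_of_mem_nodes d C hC hx⟩
termination_by d => sizeOf d
decreasing_by simp only [Dendrogram.node.sizeOf_spec]; have := List.sizeOf_lt_of_mem hd; omega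

theorem carrier_nonempty : ∀ (d : Dendrogram V), d.Valid → d.carrier.Nonempty
  | .leaf v => fun _ => by simp [Dendrogram.carrier]
  | .node cs => fun hv => by
      rw [Dendrogram.Valid] at hv
      obtain ⟨hne, _, hval⟩ := hv
      obtain ⟨d, hd⟩ := List.exists_mem_of_ne_nil cs hne
      obtain ⟨x, hx⟩ := carrier_nonempty d (hval d hd)
      exact ⟨x, mem_carrier_node.mpr ⟨d, hd, hx⟩⟩
termination_by d => sizeOf d
decreasing_by simp only [Dendrogram.node.sizeOf_spec]; have := List.sizeOf_lt_of_mem hd; omega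

theorem nodes_nonempty : ∀ (d : Dendrogram V), d.Valid → ∀ C ∈ d.nodes, C.Nonempty
  | .leaf v => fun _ => by simp [Dendrogram.nodes]
  | .node cs => fun hv C hC => by
      rcases mem_nodes_node.mp hC with rfl | ⟨d, hd, hC⟩
      · exact carrier_nonempty _ hv
      · rw [Dendrogram.Valid] at hv
        exact nodes_nonempty d (hv.2.2 d hd) C hC
termination_by d => sizeOf d
decreasing_by simp only [Dendrogram.node.sizeOf_spec]; have := List.sizeOf_lt_of_mem hd; omega

lemma biUnion_union' {α β : Type*} [DecidableEq α] [DecidableEq β]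
    (s t : Finset α) (f : α → Finset β) :
    (s ∪ t).biUnion f = s.biUnion f ∪ t.biUnion f := by
  ext x; simp [Finset.mem_biUnion, or_and_right, exists_or]

/-- if the partition `P_max` maximizing an additive quality
function `Q` over `Π_C` is not `{C}`, then its restriction to each child `Cᵢ`
is a partition in `Π_{Cᵢ}` maximizing `Q` over `Π_{Cᵢ}`. -/
theorem restriction_of_max_partition_is_max
    (q : Finset V → ℝ)
    (cs : List (Dendrogram V)) (hvalid : (Dendrogram.node cs).Valid)
    (Pmax : Finset (Finset V)) (hPmax : Pmax ∈ (Dendrogram.node cs).parts)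
    (hmax : ∀ P ∈ (Dendrogram.node cs).parts, ∑ C ∈ P, q C ≤ ∑ C ∈ Pmax, q C)
    (hne : Pmax ≠ {(Dendrogram.node cs).carrier}) :
    ∀ d ∈ cs, (Pmax.filter (· ⊆ d.carrier)) ∈ d.parts ∧
      ∀ P' ∈ d.parts, ∑ C ∈ P', q C ≤ ∑ C ∈ Pmax.filter (· ⊆ d.carrier), q C := by
  obtain ⟨hnodes, hdisjP, hunion⟩ := hPmax
  have hvalid' := hvalid
  rw [Dendrogram.Valid] at hvalid'
  -- pairwise disjointness of child carriers, symmetrized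
  have hpw : ∀ a ∈ cs, ∀ b ∈ cs, a ≠ b → Disjoint a.carrier b.carrier := by
    intro a ha b hb hab
    haveI : Std.Symm (fun a b : Dendrogram V => Disjoint a.carrier b.carrier) := ⟨fun _ _ h => h.symm⟩
    exact List.Pairwise.forall hvalid'.2.1 ha hb hab
  -- the full carrier is not a part of Pmax
  have hA : (Dendrogram.node cs).carrier ∉ Pmax := by
    intro hA
    apply hne
    apply Finset.eq_singleton_iff_unique_mem.mpr
    refine ⟨hA, fun C hC => ?_⟩
    by_contra hCne
    have hsub := subset_carrier_of_mem_nodes _ C (hnodes C hC)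
    obtain ⟨x, hx⟩ := nodes_nonempty _ hvalid C (hnodes C hC)
    exact Finset.disjoint_left.mp (hdisjP C hC _ hA hCne) hx (hsub hx)
  -- every part of Pmax is a node of some child
  have hassign : ∀ C ∈ Pmax, ∃ d ∈ cs, C ∈ d.nodes := by
    intro C hC
    rcases mem_nodes_node.mp (hnodes C hC) with rfl | h
    · exact absurd hC hA
    · exact h
  -- a part contained in a child carrier is a node of that child
  have huniq : ∀ C ∈ Pmax, ∀ d ∈ cs, C ⊆ d.carrier → C ∈ d.nodes := by
    intro C hC d hd hsub
    obtain ⟨d', hd', hCd'⟩ := hassign C hC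
    obtain ⟨x, hx⟩ := nodes_nonempty _ hvalid C (hnodes C hC)
    have hsub' := subset_carrier_of_mem_nodes d' C hCd'
    by_cases hdd : d = d'
    · subst hdd; exact hCd'
    · exact absurd (Finset.disjoint_left.mp (hpw d hd d' hd' hdd) (hsub hx) (hsub' hx)) (fun h => h)
  intro d hd
  -- the restriction covers exactly d.carrier
  have hkey : (Pmax.filter (· ⊆ d.carrier)).biUnion id = d.carrier := by
    apply Finset.Subset.antisymm
    · intro x hx
      obtain ⟨C, hC, hxC⟩ := Finset.mem_biUnion.mp hx
      exact (Finset.mem_filter.mp hC).2 hxC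
    · intro x hx
      have hxA : x ∈ Pmax.biUnion id := by
        rw [hunion]; exact mem_carrier_node.mpr ⟨d, hd, hx⟩
      obtain ⟨C, hC, hxC⟩ := Finset.mem_biUnion.mp hxA
      obtain ⟨d', hd', hCd'⟩ := hassign C hC
      have hsub' := subset_carrier_of_mem_nodes d' C hCd'
      have hdd : d = d' := by
        by_contra hdd
        exact Finset.disjoint_left.mp (hpw d hd d' hd' hdd) hx (hsub' hxC)
      subst hdd
      exact Finset.mem_biUnion.mpr ⟨C, Finset.mem_filter.mpr ⟨hC, hsub'⟩, hxC⟩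
  have hfilt : (Pmax.filter (· ⊆ d.carrier)) ∈ d.parts := by
    refine ⟨fun C hC => ?_, fun C₁ h1 C₂ h2 h12 => ?_, hkey⟩
    · obtain ⟨hC, hsub⟩ := Finset.mem_filter.mp hC
      exact huniq C hC d hd hsub
    · exact hdisjP C₁ (Finset.mem_of_mem_filter _ h1) C₂ (Finset.mem_of_mem_filter _ h2) h12
  refine ⟨hfilt, fun P' hP' => ?_⟩
  obtain ⟨hn', hd', hu'⟩ := hP'
  have hsubP' : ∀ C ∈ P', C ⊆ d.carrier := fun C hC => subset_carrier_of_mem_nodes d C (hn' C hC)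
  set R := Pmax.filter (fun C => ¬ C ⊆ d.carrier) with hR
  have hRsub : ∀ C ∈ R, ¬ C ⊆ d.carrier := fun C hC => (Finset.mem_filter.mp hC).2
  have hRmem : ∀ C ∈ R, C ∈ Pmax := fun C hC => Finset.mem_of_mem_filter _ hC
  have hdisjPR : Disjoint P' R :=
    Finset.disjoint_left.mpr (fun {C} hC hCR => hRsub C hCR (hsubP' C hC))
  have cross : ∀ C₁ ∈ P', ∀ C₂ ∈ R, Disjoint C₁ C₂ := by
    intro C₁ h1 C₂ h2
    obtain ⟨d', hd', hCd'⟩ := hassign C₂ (hRmem C₂ h2)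
    have hsub2 := subset_carrier_of_mem_nodes d' C₂ hCd'
    have hdd : d ≠ d' := by
      rintro rfl
      exact hRsub C₂ h2 hsub2
    exact (hpw d hd d' hd' hdd).mono (hsubP' C₁ h1) hsub2
  have hP'' : P' ∪ R ∈ (Dendrogram.node cs).parts := by
    refine ⟨fun C hC => ?_, fun C₁ h1 C₂ h2 h12 => ?_, ?_⟩
    · rcases Finset.mem_union.mp hC with h | h
      · exact mem_nodes_node.mpr (Or.inr ⟨d, hd, hn' C h⟩)
      · exact hnodes C (hRmem C h)
    · rcases Finset.mem_union.mp h1 with ha | ha <;> rcases Finset.mem_union.mp h2 with hb | hb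
      · exact hd' C₁ ha C₂ hb h12
      · exact cross C₁ ha C₂ hb
      · exact (cross C₂ hb C₁ ha).symm
      · exact hdisjP C₁ (hRmem C₁ ha) C₂ (hRmem C₂ hb) h12
    · calc (P' ∪ R).biUnion id = P'.biUnion id ∪ R.biUnion id := biUnion_union' _ _ _
        _ = (Pmax.filter (· ⊆ d.carrier)).biUnion id ∪ R.biUnion id := by rw [hu', hkey]
        _ = ((Pmax.filter (· ⊆ d.carrier)) ∪ R).biUnion id := (biUnion_union' _ _ _).symm
        _ = Pmax.biUnion id := by rw [hR, Finset.filter_union_filter_not_eq]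
        _ = (Dendrogram.node cs).carrier := hunion
  have h1 := hmax _ hP''
  rw [Finset.sum_union hdisjPR] at h1
  have h2 : ∑ C ∈ Pmax.filter (· ⊆ d.carrier), q C + ∑ C ∈ R, q C = ∑ C ∈ Pmax, q C :=
    Finset.sum_filter_add_sum_filter_not _ _ _
  linarith
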